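/- arXiv:0905.2399 — 2 statements merged into one kernel-verified Lean document; each statement's English description precedes it below -/
import Mathlib

section
/- Let γ ∈ (0,1] and let f : ℝ^d → L(ℝ^m, ℝ^d) be γ-Hölder with constant H (so in particular f has at most linear growth). Define h : Ω → L(ℝ^m, ℝ^d × ℝ) by h(θ,ρ) = Dφ(e^ρ θ) ∘ f(e^ρ θ), where Ω = {(θ,ρ) ∈ ℝ^d × ℝ : ‖θ‖ = 1, ρ ≥ 1} and φ(z) = (z/‖z‖, log‖z‖). Then h is bounded on Ω and γ-Hölder on Ω: there exists a constant C (depending only on H, ‖f‖ on the unit sphere, γ and d) such that ‖h(θ,ρ)‖ ≤ C and ‖h(θ,ρ) − h(θ′,ρ′)‖ ≤ C (‖θ − θ′‖^γ + |ρ − ρ′|^γ) for all (θ,ρ), (θ′,ρ′) ∈ Ω. -/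
noncomputable section

/-- `E n` is the Euclidean space `ℝ^n`. -/
abbrev E (n : ℕ) : Type := EuclideanSpace ℝ (Fin n)

/-- The angular part `Θ(z) = z / ‖z‖` of the polar-logarithmic change of variable. -/
def thetaMap (d : ℕ) (z : E d) : E d := ‖z‖⁻¹ • z

/-- The radial part `R(z) = log ‖z‖` of the polar-logarithmic change of variable. -/
def logMap (d : ℕ) (z : E d) : ℝ := Real.log ‖z‖

/-- The polar-logarithmic change of variable `φ(z) = (z/‖z‖, log ‖z‖)`. -/
def phiMap (d : ℕ) (z : E d) : E d × ℝ := (thetaMap d z, logMap d z)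

/-- The transformed vector field `h(θ,ρ) = Dφ(e^ρ θ) ∘ f(e^ρ θ)`. -/
def hMap {d m : ℕ} (f : E d → (E m →L[ℝ] E d)) (θ : E d) (ρ : ℝ) :
    E m →L[ℝ] E d × ℝ :=
  (fderiv ℝ (phiMap d) (Real.exp ρ • θ)).comp (f (Real.exp ρ • θ))

open ContinuousLinearMap in
/-- The map `v ↦ (v - ⟪θ,v⟫θ, ⟪θ,v⟫)`, which is `e^ρ • Dφ(e^ρ θ)` for a unit vector `θ`. -/
def Pmap (d : ℕ) (θ : E d) : E d →L[ℝ] E d × ℝ :=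
  ((ContinuousLinearMap.id ℝ (E d)) - (innerSL ℝ θ).smulRight θ).prod (innerSL ℝ θ)

lemma Pmap_apply {d : ℕ} (θ v : E d) :
    Pmap d θ v = (v - (inner ℝ θ v : ℝ) • θ, (inner ℝ θ v : ℝ)) := by
  simp [Pmap]

lemma hasFDerivAt_norm' {d : ℕ} {z : E d} (hz : z ≠ 0) :
    HasFDerivAt (fun x : E d => ‖x‖) (‖z‖⁻¹ • innerSL ℝ z) z := by
  have h1 : HasFDerivAt (fun x : E d => ‖x‖ ^ 2) (2 • innerSL ℝ z) z :=
    (hasStrictFDerivAt_norm_sq z).hasFDerivAt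
  have h2 : HasDerivAt Real.sqrt (1 / (2 * Real.sqrt (‖z‖ ^ 2))) (‖z‖ ^ 2) :=
    Real.hasDerivAt_sqrt (by have : ‖z‖ ≠ 0 := norm_ne_zero_iff.mpr hz; positivity)
  have h3 := h2.comp_hasFDerivAt z h1
  have hnz : ‖z‖ ≠ 0 := norm_ne_zero_iff.mpr hz
  have he : (fun x : E d => Real.sqrt (‖x‖ ^ 2)) = fun x : E d => ‖x‖ := by
    ext x; rw [Real.sqrt_sq (norm_nonneg x)]
  rw [Function.comp_def, he] at h3
  refine h3.congr_fderiv ?_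
  rw [Real.sqrt_sq (norm_nonneg z)]
  ext v
  simp [smul_smul]
  field_simp

lemma hasFDerivAt_phiMap {d : ℕ} {θ : E d} (hθ : ‖θ‖ = 1) {r : ℝ} (hr : 0 < r) :
    HasFDerivAt (phiMap d) (r⁻¹ • Pmap d θ) (r • θ) := by
  set z : E d := r • θ with hzdef
  have hznorm : ‖z‖ = r := by
    rw [hzdef, norm_smul, hθ, Real.norm_eq_abs, abs_of_pos hr, mul_one]
  have hz : z ≠ 0 := by
    intro h; rw [h, norm_zero] at hznorm; exact hr.ne' hznorm.symm
  have hrne : ‖z‖ ≠ 0 := by rw [hznorm]; exact hr.ne'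
  have hN := hasFDerivAt_norm' hz
  have hinv : HasFDerivAt (fun x : E d => ‖x‖⁻¹)
      ((-(‖z‖ ^ 2)⁻¹) • (‖z‖⁻¹ • innerSL ℝ z)) z := by
    simpa [Function.comp_def] using (hasDerivAt_inv hrne).comp_hasFDerivAt z hN
  have htheta : HasFDerivAt (thetaMap d)
      (‖z‖⁻¹ • ContinuousLinearMap.id ℝ (E d)
        + ((-(‖z‖ ^ 2)⁻¹) • (‖z‖⁻¹ • innerSL ℝ z)).smulRight z) z :=
    hinv.smul (hasFDerivAt_id z)
  have hlog : HasFDerivAt (logMap d) (‖z‖⁻¹ • (‖z‖⁻¹ • innerSL ℝ z)) z := by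
    exact (Real.hasDerivAt_log hrne).comp_hasFDerivAt z hN
  have hphi := htheta.prodMk hlog
  refine HasFDerivAt.congr_fderiv hphi (Eq.symm ?_)
  refine ContinuousLinearMap.ext fun v => Prod.ext ?_ ?_
  · simp only [Pmap, ContinuousLinearMap.smul_apply, ContinuousLinearMap.prod_apply,
      ContinuousLinearMap.coe_sub', Pi.sub_apply, ContinuousLinearMap.coe_id', id_eq,
      ContinuousLinearMap.smulRight_apply, ContinuousLinearMap.coe_smul', Pi.smul_apply,
      ContinuousLinearMap.add_apply, Prod.smul_fst]
    rw [hznorm, hzdef]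
    simp only [innerSL_apply_apply, real_inner_smul_left]
    match_scalars
    · ring
    · field_simp
      simp only [smul_eq_mul]
      field_simp
  · simp only [Pmap, ContinuousLinearMap.smul_apply, ContinuousLinearMap.prod_apply,
      Prod.smul_snd]
    rw [hznorm, hzdef]
    simp only [innerSL_apply_apply, real_inner_smul_left]
    field_simp
    simp only [smul_eq_mul]
    field_simp

lemma hMap_eq {d m : ℕ} (f : E d → (E m →L[ℝ] E d)) {θ : E d} (hθ : ‖θ‖ = 1) (ρ : ℝ) :
    hMap f θ ρ = (Real.exp ρ)⁻¹ • (Pmap d θ).comp (f (Real.exp ρ • θ)) := by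
  rw [hMap, (hasFDerivAt_phiMap hθ (Real.exp_pos ρ)).fderiv, ContinuousLinearMap.smul_comp]

lemma Pmap_norm_le {d : ℕ} {θ : E d} (hθ : ‖θ‖ = 1) : ‖Pmap d θ‖ ≤ 2 := by
  refine ContinuousLinearMap.opNorm_le_bound _ (by norm_num) fun v => ?_
  rw [Pmap_apply, Prod.norm_def]
  have hin : |(inner ℝ θ v : ℝ)| ≤ ‖v‖ := by
    have := abs_real_inner_le_norm θ v; rwa [hθ, one_mul] at this
  refine max_le ?_ (by simpa using hin.trans (by nlinarith [norm_nonneg v]))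
  calc ‖v - (inner ℝ θ v : ℝ) • θ‖ ≤ ‖v‖ + ‖(inner ℝ θ v : ℝ) • θ‖ := norm_sub_le _ _
    _ ≤ ‖v‖ + ‖v‖ := by rw [norm_smul, hθ, mul_one, Real.norm_eq_abs]; linarith
    _ = 2 * ‖v‖ := by ring

lemma Pmap_sub_norm_le {d : ℕ} {θ θ' : E d} (hθ : ‖θ‖ = 1) (hθ' : ‖θ'‖ = 1) :
    ‖Pmap d θ - Pmap d θ'‖ ≤ 2 * ‖θ - θ'‖ := by
  refine ContinuousLinearMap.opNorm_le_bound _ (by positivity) fun v => ?_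
  have happ : (Pmap d θ - Pmap d θ') v
      = ((inner ℝ θ' v : ℝ) • θ' - (inner ℝ θ v : ℝ) • θ, (inner ℝ (θ - θ') v : ℝ)) := by
    rw [ContinuousLinearMap.sub_apply, Pmap_apply, Pmap_apply, Prod.mk_sub_mk,
      inner_sub_left]
    congr 1
    abel
  rw [happ, Prod.norm_def]
  have h2 : |(inner ℝ (θ - θ') v : ℝ)| ≤ ‖θ - θ'‖ * ‖v‖ := abs_real_inner_le_norm _ _
  refine max_le ?_ (h2.trans (by nlinarith [norm_nonneg v, norm_nonneg (θ - θ'), abs_nonneg (inner ℝ (θ-θ') v : ℝ)]))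
  have hkey : (inner ℝ θ' v : ℝ) • θ' - (inner ℝ θ v : ℝ) • θ
      = (inner ℝ (θ' - θ) v : ℝ) • θ' + (inner ℝ θ v : ℝ) • (θ' - θ) := by
    rw [inner_sub_left, sub_smul, smul_sub]; abel
  rw [hkey]
  have h3 : |(inner ℝ (θ' - θ) v : ℝ)| ≤ ‖θ' - θ‖ * ‖v‖ := abs_real_inner_le_norm _ _
  have h4 : |(inner ℝ θ v : ℝ)| ≤ ‖v‖ := by
    have := abs_real_inner_le_norm θ v; rwa [hθ, one_mul] at this
  have h5 : ‖θ' - θ‖ = ‖θ - θ'‖ := norm_sub_rev _ _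
  calc ‖(inner ℝ (θ' - θ) v : ℝ) • θ' + (inner ℝ θ v : ℝ) • (θ' - θ)‖
      ≤ ‖(inner ℝ (θ' - θ) v : ℝ) • θ'‖ + ‖(inner ℝ θ v : ℝ) • (θ' - θ)‖ := norm_add_le _ _
    _ = |(inner ℝ (θ' - θ) v : ℝ)| * 1 + |(inner ℝ θ v : ℝ)| * ‖θ' - θ‖ := by
        rw [norm_smul, norm_smul, hθ', Real.norm_eq_abs, Real.norm_eq_abs]
    _ ≤ 2 * ‖θ - θ'‖ * ‖v‖ := by
        rw [h5] at h3 ⊢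
        nlinarith [norm_nonneg (θ - θ'), norm_nonneg v, abs_nonneg (inner ℝ θ v : ℝ)]

lemma exp_diff_le' {a b : ℝ} : Real.exp b - Real.exp a ≤ (b - a) * Real.exp b := by
  have h1 := Real.add_one_le_exp (a - b)
  have h2 : Real.exp (a - b) * Real.exp b = Real.exp a := by
    rw [← Real.exp_add]; ring_nf
  nlinarith [Real.exp_pos b]

lemma rpow_subadd' {γ : ℝ} (hγ0 : 0 ≤ γ) (hγ1 : γ ≤ 1) {a b : ℝ} (ha : 0 ≤ a) (hb : 0 ≤ b) :
    (a + b) ^ γ ≤ a ^ γ + b ^ γ := by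
  have h := NNReal.rpow_add_le_add_rpow a.toNNReal b.toNNReal hγ0 hγ1
  rw [← NNReal.coe_le_coe] at h
  push_cast [Real.coe_toNNReal _ ha, Real.coe_toNNReal _ hb] at h
  exact h

lemma self_le_rpow'' {x γ : ℝ} (hγ0 : 0 < γ) (hγ1 : γ ≤ 1) (h0 : 0 ≤ x) (h1 : x ≤ 1) :
    x ≤ x ^ γ := by
  rcases eq_or_lt_of_le h0 with h | h
  · rw [← h, Real.zero_rpow hγ0.ne']
  · calc x = x ^ (1:ℝ) := (Real.rpow_one x).symm
      _ ≤ x ^ γ := Real.rpow_le_rpow_of_exponent_ge h h1 hγ1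

lemma le_two_mul_rpow' {x γ : ℝ} (hγ0 : 0 < γ) (hγ1 : γ ≤ 1) (h0 : 0 ≤ x) (h2 : x ≤ 2) :
    x ≤ 2 * x ^ γ := by
  rcases eq_or_lt_of_le h0 with h | h
  · rw [← h, Real.zero_rpow hγ0.ne']; norm_num
  · have h3 : x ^ (1-γ) ≤ 2 ^ (1-γ) := Real.rpow_le_rpow h0 h2 (by linarith)
    have h4 : (2:ℝ) ^ (1-γ) ≤ 2 ^ (1:ℝ) :=
      Real.rpow_le_rpow_of_exponent_le one_le_two (by linarith)
    have h5 : x ^ γ * x ^ (1-γ) = x := by rw [← Real.rpow_add h]; norm_num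
    have h6 : 0 ≤ x ^ γ := Real.rpow_nonneg h0 _
    rw [Real.rpow_one] at h4
    nlinarith

set_option maxHeartbeats 800000 in
lemma combine_arith (γ A H₀ δ t r' Nf Z S : ℝ)
    (hγ0 : 0 < γ) (hγ1 : γ ≤ 1) (hA0 : 0 ≤ A) (hH00 : 0 ≤ H₀)
    (hδ0 : 0 ≤ δ) (hδ1 : δ ≤ 1) (ht0 : 0 ≤ t) (ht2 : t ≤ 2)
    (hr'1 : 1 ≤ r') (hNf0 : 0 ≤ Nf)
    (hNfr : r'⁻¹ * Nf ≤ A + Real.exp 1 * H₀)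
    (hS0 : 0 ≤ S) (hS1 : S ≤ δ * r'⁻¹)
    (hZ : 0 ≤ Z) (hzz' : Z ≤ r' * (Real.exp 1 * δ + t)) :
    S * (2 * Nf) + r'⁻¹ * (2 * t * Nf) + r'⁻¹ * (2 * (H₀ * Z ^ γ))
      ≤ 6 * (A + H₀ + 1) * Real.exp 1 * (t ^ γ + δ ^ γ) := by
  have hr'0 : (0:ℝ) < r' := by linarith
  have he1 : (1:ℝ) ≤ Real.exp 1 := by have := Real.add_one_le_exp 1; linarith
  have hX1 : (0:ℝ) ≤ δ ^ γ := Real.rpow_nonneg hδ0 _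
  have hX2 : (0:ℝ) ≤ t ^ γ := Real.rpow_nonneg ht0 _
  have hB0 : (0:ℝ) ≤ A + Real.exp 1 * H₀ := by positivity
  have hinv0 : (0:ℝ) < r'⁻¹ := by positivity
  have hδγ : δ ≤ δ ^ γ := self_le_rpow'' hγ0 hγ1 hδ0 hδ1
  have T1 : S * (2 * Nf) ≤ 2 * (A + Real.exp 1 * H₀) * δ ^ γ := by
    have h1 : S * (2 * Nf) ≤ (δ * r'⁻¹) * (2 * Nf) :=
      mul_le_mul_of_nonneg_right hS1 (by positivity)
    have h3 : 2 * δ * (r'⁻¹ * Nf) ≤ 2 * δ * (A + Real.exp 1 * H₀) :=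
      mul_le_mul_of_nonneg_left hNfr (by positivity)
    have h4 : 2 * δ * (A + Real.exp 1 * H₀) ≤ 2 * (A + Real.exp 1 * H₀) * δ ^ γ := by
      nlinarith
    nlinarith [h1, h3, h4]
  have ht' : t ≤ 2 * t ^ γ := le_two_mul_rpow' hγ0 hγ1 ht0 ht2
  have T2 : r'⁻¹ * (2 * t * Nf) ≤ 4 * (A + Real.exp 1 * H₀) * t ^ γ := by
    have h2 : 2 * t * (r'⁻¹ * Nf) ≤ 2 * t * (A + Real.exp 1 * H₀) :=
      mul_le_mul_of_nonneg_left hNfr (by positivity)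
    have h3 : 2 * t * (A + Real.exp 1 * H₀) ≤ 2 * (2 * t ^ γ) * (A + Real.exp 1 * H₀) := by
      nlinarith
    nlinarith [h2, h3]
  have hrpow : Z ^ γ ≤ r' ^ γ * (Real.exp 1 * δ ^ γ + t ^ γ) := by
    have s1 : Z ^ γ ≤ (r' * (Real.exp 1 * δ + t)) ^ γ :=
      Real.rpow_le_rpow hZ hzz' hγ0.le
    have s2 : (r' * (Real.exp 1 * δ + t)) ^ γ = r' ^ γ * (Real.exp 1 * δ + t) ^ γ :=
      Real.mul_rpow hr'0.le (by positivity)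
    have s3 : (Real.exp 1 * δ + t) ^ γ ≤ (Real.exp 1 * δ) ^ γ + t ^ γ :=
      rpow_subadd' hγ0.le hγ1 (by positivity) ht0
    have s4 : (Real.exp 1 * δ) ^ γ = (Real.exp 1) ^ γ * δ ^ γ :=
      Real.mul_rpow (by positivity) hδ0
    have s5 : (Real.exp 1) ^ γ ≤ Real.exp 1 := by
      have := Real.rpow_le_rpow_of_exponent_le he1 hγ1
      rwa [Real.rpow_one] at this
    have s6 : (0:ℝ) ≤ r' ^ γ := Real.rpow_nonneg hr'0.le _
    have s7 : (Real.exp 1) ^ γ * δ ^ γ ≤ Real.exp 1 * δ ^ γ :=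
      mul_le_mul_of_nonneg_right s5 hX1
    calc Z ^ γ ≤ r' ^ γ * (Real.exp 1 * δ + t) ^ γ := by rw [← s2]; exact s1
      _ ≤ r' ^ γ * ((Real.exp 1 * δ) ^ γ + t ^ γ) := mul_le_mul_of_nonneg_left s3 s6
      _ ≤ r' ^ γ * (Real.exp 1 * δ ^ γ + t ^ γ) := by
          apply mul_le_mul_of_nonneg_left _ s6
          rw [s4]; linarith
  have hr'γ : r'⁻¹ * r' ^ γ ≤ 1 := by
    have s1 : r' ^ γ ≤ r' := by
      have := Real.rpow_le_rpow_of_exponent_le hr'1 hγ1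
      rwa [Real.rpow_one] at this
    have s2 : r'⁻¹ * r' ^ γ ≤ r'⁻¹ * r' := mul_le_mul_of_nonneg_left s1 (by positivity)
    rwa [inv_mul_cancel₀ hr'0.ne'] at s2
  have T3 : r'⁻¹ * (2 * (H₀ * Z ^ γ))
      ≤ 2 * Real.exp 1 * H₀ * (δ ^ γ + t ^ γ) := by
    have hY0 : 0 ≤ Real.exp 1 * δ ^ γ + t ^ γ := by positivity
    have s1 : r'⁻¹ * (2 * (H₀ * Z ^ γ))
        ≤ r'⁻¹ * (2 * (H₀ * (r' ^ γ * (Real.exp 1 * δ ^ γ + t ^ γ)))) := by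
      apply mul_le_mul_of_nonneg_left _ (by positivity)
      apply mul_le_mul_of_nonneg_left _ (by norm_num)
      exact mul_le_mul_of_nonneg_left hrpow hH00
    have s2 : r'⁻¹ * (2 * (H₀ * (r' ^ γ * (Real.exp 1 * δ ^ γ + t ^ γ))))
        = 2 * H₀ * (Real.exp 1 * δ ^ γ + t ^ γ) * (r'⁻¹ * r' ^ γ) := by ring
    have s3 : 2 * H₀ * (Real.exp 1 * δ ^ γ + t ^ γ) * (r'⁻¹ * r' ^ γ)
        ≤ 2 * H₀ * (Real.exp 1 * δ ^ γ + t ^ γ) * 1 :=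
      mul_le_mul_of_nonneg_left hr'γ (by positivity)
    have s4 : 2 * H₀ * (Real.exp 1 * δ ^ γ + t ^ γ)
        ≤ 2 * Real.exp 1 * H₀ * (δ ^ γ + t ^ γ) := by
      nlinarith [mul_nonneg (mul_nonneg (sub_nonneg.mpr he1) hH00) hX2,
        mul_nonneg (mul_nonneg (sub_nonneg.mpr he1) hH00) hX1]
    linarith [s1, s2, s3, s4]
  have f1 : A ≤ Real.exp 1 * A := by nlinarith
  have f2 : H₀ ≤ Real.exp 1 * H₀ := by nlinarith
  have c1 : 2 * (A + Real.exp 1 * H₀) + 2 * Real.exp 1 * H₀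
      ≤ 6 * (A + H₀ + 1) * Real.exp 1 := by nlinarith
  have c2 : 4 * (A + Real.exp 1 * H₀) + 2 * Real.exp 1 * H₀
      ≤ 6 * (A + H₀ + 1) * Real.exp 1 := by nlinarith
  have m1 := mul_le_mul_of_nonneg_right c1 hX1
  have m2 := mul_le_mul_of_nonneg_right c2 hX2
  nlinarith [T1, T2, T3, m1, m2]

set_option maxHeartbeats 1600000 in
lemma growth_aux {d m : ℕ} (γ H : ℝ) (f : E d → (E m →L[ℝ] E d))
    (hf : ∀ v v', ‖f v - f v'‖ ≤ H * ‖v - v'‖ ^ γ)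
    {θ : E d} (ρ : ℝ) (hθ : ‖θ‖ = 1) :
    ‖f (Real.exp ρ • θ)‖ ≤ ‖f 0‖ + max H 0 * Real.exp (γ * ρ) := by
  have h1 : ‖f (Real.exp ρ • θ) - f 0‖ ≤ H * ‖Real.exp ρ • θ - 0‖ ^ γ := hf _ 0
  have hn : ‖Real.exp ρ • θ - 0‖ = Real.exp ρ := by
    rw [sub_zero, norm_smul, hθ, Real.norm_eq_abs, abs_of_pos (Real.exp_pos ρ), mul_one]
  have h2 : ‖Real.exp ρ • θ - 0‖ ^ γ = Real.exp (γ * ρ) := by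
    rw [hn, ← Real.exp_mul, mul_comm]
  have h3 : ‖f (Real.exp ρ • θ)‖ ≤ ‖f (Real.exp ρ • θ) - f 0‖ + ‖f 0‖ := by
    have := norm_add_le (f (Real.exp ρ • θ) - f 0) (f 0); simpa using this
  have h4 : H * ‖Real.exp ρ • θ - 0‖ ^ γ ≤ max H 0 * Real.exp (γ * ρ) := by
    rw [h2]; exact mul_le_mul_of_nonneg_right (le_max_left _ _) (Real.exp_pos _).le
  linarith

set_option maxHeartbeats 1600000 in
lemma bound_aux {d m : ℕ} (γ H : ℝ) (hγ1 : γ ≤ 1) (f : E d → (E m →L[ℝ] E d))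
    (hf : ∀ v v', ‖f v - f v'‖ ≤ H * ‖v - v'‖ ^ γ)
    {θ : E d} {ρ : ℝ} (hθ : ‖θ‖ = 1) (hρ : 1 ≤ ρ) :
    ‖hMap f θ ρ‖ ≤ 2 * (‖f 0‖ + max H 0) := by
  have hA0 : (0:ℝ) ≤ ‖f 0‖ := norm_nonneg _
  have hH00 : (0:ℝ) ≤ max H 0 := le_max_right _ _
  have hr0 : (0:ℝ) < Real.exp ρ := Real.exp_pos ρ
  have hr1 : (1:ℝ) ≤ Real.exp ρ := by
    rw [← Real.exp_zero]; exact Real.exp_le_exp.mpr (by linarith)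
  have hE : Real.exp (γ * ρ) ≤ Real.exp ρ := Real.exp_le_exp.mpr (by nlinarith)
  rw [hMap_eq f hθ]
  refine (ContinuousLinearMap.opNorm_smul_le _ _).trans ?_
  rw [Real.norm_eq_abs, abs_of_pos (inv_pos.mpr hr0)]
  have hc := ContinuousLinearMap.opNorm_comp_le (Pmap d θ) (f (Real.exp ρ • θ))
  have hP := Pmap_norm_le hθ
  have hfz := growth_aux γ H f hf ρ hθ
  have h1 : ‖(Pmap d θ).comp (f (Real.exp ρ • θ))‖
      ≤ 2 * (‖f 0‖ + max H 0 * Real.exp (γ * ρ)) := by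
    nlinarith [norm_nonneg (f (Real.exp ρ • θ)), ContinuousLinearMap.opNorm_nonneg (Pmap d θ),
      Real.exp_pos (γ * ρ)]
  have h2 : 2 * (‖f 0‖ + max H 0 * Real.exp (γ * ρ))
      ≤ 2 * (‖f 0‖ + max H 0) * Real.exp ρ := by nlinarith
  have h3 := mul_le_mul_of_nonneg_left h1 (inv_pos.mpr hr0).le
  have h4 := mul_le_mul_of_nonneg_left h2 (inv_pos.mpr hr0).le
  have h5 : (Real.exp ρ)⁻¹ * (2 * (‖f 0‖ + max H 0) * Real.exp ρ)
      = 2 * (‖f 0‖ + max H 0) := by field_simp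
  linarith

set_option maxHeartbeats 1600000 in
lemma holder_aux {d m : ℕ} (γ H : ℝ) (hγ0 : 0 < γ) (hγ1 : γ ≤ 1)
    (f : E d → (E m →L[ℝ] E d))
    (hf : ∀ v v', ‖f v - f v'‖ ≤ H * ‖v - v'‖ ^ γ)
    (θ θ' : E d) (ρ ρ' : ℝ) (hθ : ‖θ‖ = 1) (hθ' : ‖θ'‖ = 1)
    (hρ : 1 ≤ ρ) (hρ' : 1 ≤ ρ') (hord : ρ' ≤ ρ) (hdiff : ρ - ρ' ≤ 1) :
    ‖hMap f θ ρ - hMap f θ' ρ'‖ ≤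
      (6 * (‖f 0‖ + max H 0 + 1) * Real.exp 1) * (‖θ - θ'‖ ^ γ + |ρ - ρ'| ^ γ) := by
  have hA0 : (0:ℝ) ≤ ‖f 0‖ := norm_nonneg _
  have hH00 : (0:ℝ) ≤ max H 0 := le_max_right _ _
  have he1 : (1:ℝ) ≤ Real.exp 1 := by have := Real.add_one_le_exp 1; linarith
  have hr0 : (0:ℝ) < Real.exp ρ := Real.exp_pos _
  have hr'0 : (0:ℝ) < Real.exp ρ' := Real.exp_pos _
  have hr1 : (1:ℝ) ≤ Real.exp ρ := by
    rw [← Real.exp_zero]; exact Real.exp_le_exp.mpr (by linarith)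
  have hr'1 : (1:ℝ) ≤ Real.exp ρ' := by
    rw [← Real.exp_zero]; exact Real.exp_le_exp.mpr (by linarith)
  have hrr' : Real.exp ρ' ≤ Real.exp ρ := Real.exp_le_exp.mpr hord
  have hδ0 : (0:ℝ) ≤ ρ - ρ' := by linarith
  have hfz := growth_aux γ H f hf ρ hθ
  have hNf0 : (0:ℝ) ≤ ‖f 0‖ + max H 0 * Real.exp (γ * ρ) := by positivity
  have hEr : Real.exp (γ * ρ) ≤ Real.exp 1 * Real.exp ρ' := by
    rw [← Real.exp_add]
    exact Real.exp_le_exp.mpr (by nlinarith)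
  have hNfr : (Real.exp ρ')⁻¹ * (‖f 0‖ + max H 0 * Real.exp (γ * ρ))
      ≤ ‖f 0‖ + Real.exp 1 * max H 0 := by
    have h1 : (Real.exp ρ')⁻¹ ≤ 1 := by
      rw [inv_le_one_iff₀]; right; exact hr'1
    have h2 : Real.exp (γ * ρ) * (Real.exp ρ')⁻¹ ≤ Real.exp 1 := by
      rw [← div_eq_mul_inv, div_le_iff₀ hr'0]
      linarith [hEr]
    have h3 : (Real.exp ρ')⁻¹ * (max H 0 * Real.exp (γ * ρ)) ≤ max H 0 * Real.exp 1 := by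
      nlinarith [hH00]
    have h4 : (Real.exp ρ')⁻¹ * ‖f 0‖ ≤ ‖f 0‖ := by nlinarith [hr'0.le]
    rw [mul_add]
    linarith
  have key : hMap f θ ρ - hMap f θ' ρ' =
      ((Real.exp ρ)⁻¹ - (Real.exp ρ')⁻¹) • ((Pmap d θ).comp (f (Real.exp ρ • θ)))
      + (Real.exp ρ')⁻¹ • ((Pmap d θ - Pmap d θ').comp (f (Real.exp ρ • θ)))
      + (Real.exp ρ')⁻¹ • ((Pmap d θ').comp (f (Real.exp ρ • θ) - f (Real.exp ρ' • θ'))) := by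
    have hpq : (Pmap d θ - Pmap d θ').comp (f (Real.exp ρ • θ))
        = (Pmap d θ).comp (f (Real.exp ρ • θ)) - (Pmap d θ').comp (f (Real.exp ρ • θ)) :=
      ContinuousLinearMap.sub_comp _ _ _
    have hqs : (Pmap d θ').comp (f (Real.exp ρ • θ) - f (Real.exp ρ' • θ'))
        = (Pmap d θ').comp (f (Real.exp ρ • θ)) - (Pmap d θ').comp (f (Real.exp ρ' • θ')) :=
      ContinuousLinearMap.comp_sub _ _ _
    rw [hMap_eq f hθ, hMap_eq f hθ', hpq, hqs]
    module
  have hPθ := Pmap_norm_le hθ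
  have hPθ' := Pmap_norm_le hθ'
  have hfz0 : (0:ℝ) ≤ ‖f (Real.exp ρ • θ)‖ := norm_nonneg _
  have n1 : ‖((Real.exp ρ)⁻¹ - (Real.exp ρ')⁻¹) • ((Pmap d θ).comp (f (Real.exp ρ • θ)))‖
      ≤ |(Real.exp ρ)⁻¹ - (Real.exp ρ')⁻¹|
          * (2 * (‖f 0‖ + max H 0 * Real.exp (γ * ρ))) := by
    refine (ContinuousLinearMap.opNorm_smul_le _ _).trans ?_
    rw [Real.norm_eq_abs]
    have hc := ContinuousLinearMap.opNorm_comp_le (Pmap d θ) (f (Real.exp ρ • θ))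
    have h : ‖(Pmap d θ).comp (f (Real.exp ρ • θ))‖
        ≤ 2 * (‖f 0‖ + max H 0 * Real.exp (γ * ρ)) := by nlinarith
    exact mul_le_mul_of_nonneg_left h (abs_nonneg _)
  have n2 : ‖(Real.exp ρ')⁻¹ • ((Pmap d θ - Pmap d θ').comp (f (Real.exp ρ • θ)))‖
      ≤ (Real.exp ρ')⁻¹
          * (2 * ‖θ - θ'‖ * (‖f 0‖ + max H 0 * Real.exp (γ * ρ))) := by
    refine (ContinuousLinearMap.opNorm_smul_le _ _).trans ?_
    rw [Real.norm_eq_abs, abs_of_pos (show (0:ℝ) < (Real.exp ρ')⁻¹ by positivity)]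
    have hc := ContinuousLinearMap.opNorm_comp_le (Pmap d θ - Pmap d θ') (f (Real.exp ρ • θ))
    have hP := Pmap_sub_norm_le hθ hθ'
    have h : ‖(Pmap d θ - Pmap d θ').comp (f (Real.exp ρ • θ))‖
        ≤ 2 * ‖θ - θ'‖ * (‖f 0‖ + max H 0 * Real.exp (γ * ρ)) := by
      nlinarith [norm_nonneg (Pmap d θ - Pmap d θ'), norm_nonneg (θ - θ')]
    exact mul_le_mul_of_nonneg_left h (by positivity)
  have n3 : ‖(Real.exp ρ')⁻¹ • ((Pmap d θ').comp (f (Real.exp ρ • θ) - f (Real.exp ρ' • θ')))‖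
      ≤ (Real.exp ρ')⁻¹
          * (2 * (max H 0 * ‖Real.exp ρ • θ - Real.exp ρ' • θ'‖ ^ γ)) := by
    refine (ContinuousLinearMap.opNorm_smul_le _ _).trans ?_
    rw [Real.norm_eq_abs, abs_of_pos (show (0:ℝ) < (Real.exp ρ')⁻¹ by positivity)]
    have hc := ContinuousLinearMap.opNorm_comp_le (Pmap d θ')
      (f (Real.exp ρ • θ) - f (Real.exp ρ' • θ'))
    have hH : ‖f (Real.exp ρ • θ) - f (Real.exp ρ' • θ')‖
        ≤ max H 0 * ‖Real.exp ρ • θ - Real.exp ρ' • θ'‖ ^ γ := by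
      refine (hf _ _).trans ?_
      exact mul_le_mul_of_nonneg_right (le_max_left _ _) (Real.rpow_nonneg (norm_nonneg _) _)
    have h : ‖(Pmap d θ').comp (f (Real.exp ρ • θ) - f (Real.exp ρ' • θ'))‖
        ≤ 2 * (max H 0 * ‖Real.exp ρ • θ - Real.exp ρ' • θ'‖ ^ γ) := by
      nlinarith [norm_nonneg (f (Real.exp ρ • θ) - f (Real.exp ρ' • θ')),
        Real.rpow_nonneg (norm_nonneg (Real.exp ρ • θ - Real.exp ρ' • θ')) γ,
        ContinuousLinearMap.opNorm_nonneg (Pmap d θ')]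
    exact mul_le_mul_of_nonneg_left h (by positivity)
  have hed : Real.exp ρ - Real.exp ρ' ≤ (ρ - ρ') * Real.exp ρ := exp_diff_le'
  have hS1 : |(Real.exp ρ)⁻¹ - (Real.exp ρ')⁻¹| ≤ (ρ - ρ') * (Real.exp ρ')⁻¹ := by
    have habs : |(Real.exp ρ)⁻¹ - (Real.exp ρ')⁻¹| = (Real.exp ρ')⁻¹ - (Real.exp ρ)⁻¹ := by
      rw [abs_sub_comm, abs_of_nonneg (sub_nonneg.mpr (inv_anti₀ hr'0 hrr'))]
    have hed2 : Real.exp ρ - Real.exp ρ' ≤ ((ρ - ρ') * (Real.exp ρ')⁻¹) * (Real.exp ρ * Real.exp ρ') := by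
      have : ((ρ - ρ') * (Real.exp ρ')⁻¹) * (Real.exp ρ * Real.exp ρ') = (ρ - ρ') * Real.exp ρ := by
        field_simp
      rw [this]; exact hed
    have e1 : (Real.exp ρ')⁻¹ - (Real.exp ρ)⁻¹
        = (Real.exp ρ - Real.exp ρ') / (Real.exp ρ * Real.exp ρ') := by
      field_simp
    rw [habs, e1, div_le_iff₀ (by positivity)]
    exact hed2
  have hre : Real.exp ρ ≤ Real.exp 1 * Real.exp ρ' := by
    rw [← Real.exp_add]; exact Real.exp_le_exp.mpr (by linarith)
  have hzz' : ‖Real.exp ρ • θ - Real.exp ρ' • θ'‖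
      ≤ Real.exp ρ' * (Real.exp 1 * (ρ - ρ') + ‖θ - θ'‖) := by
    have hzz : Real.exp ρ • θ - Real.exp ρ' • θ'
        = (Real.exp ρ - Real.exp ρ') • θ + Real.exp ρ' • (θ - θ') := by module
    have e5 : ‖(Real.exp ρ - Real.exp ρ') • θ‖ = |Real.exp ρ - Real.exp ρ'| := by
      rw [norm_smul, hθ, Real.norm_eq_abs, mul_one]
    have e6 : ‖Real.exp ρ' • (θ - θ')‖ = Real.exp ρ' * ‖θ - θ'‖ := by
      rw [norm_smul, Real.norm_eq_abs, abs_of_pos hr'0]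
    have e7 : |Real.exp ρ - Real.exp ρ'| = Real.exp ρ - Real.exp ρ' :=
      abs_of_nonneg (by linarith)
    have e8 : (ρ - ρ') * Real.exp ρ ≤ (ρ - ρ') * (Real.exp 1 * Real.exp ρ') :=
      mul_le_mul_of_nonneg_left hre hδ0
    rw [hzz]
    calc ‖(Real.exp ρ - Real.exp ρ') • θ + Real.exp ρ' • (θ - θ')‖
        ≤ ‖(Real.exp ρ - Real.exp ρ') • θ‖ + ‖Real.exp ρ' • (θ - θ')‖ := norm_add_le _ _
      _ = (Real.exp ρ - Real.exp ρ') + Real.exp ρ' * ‖θ - θ'‖ := by rw [e5, e6, e7]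
      _ ≤ Real.exp ρ' * (Real.exp 1 * (ρ - ρ') + ‖θ - θ'‖) := by
          nlinarith [hed, e8, norm_nonneg (θ - θ')]
  have hθθ'2 : ‖θ - θ'‖ ≤ 2 := by
    have := norm_sub_le θ θ'; rw [hθ, hθ'] at this; linarith
  have hsum : ‖hMap f θ ρ - hMap f θ' ρ'‖
      ≤ |(Real.exp ρ)⁻¹ - (Real.exp ρ')⁻¹| * (2 * (‖f 0‖ + max H 0 * Real.exp (γ * ρ)))
        + (Real.exp ρ')⁻¹ * (2 * ‖θ - θ'‖ * (‖f 0‖ + max H 0 * Real.exp (γ * ρ)))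
        + (Real.exp ρ')⁻¹ * (2 * (max H 0 * ‖Real.exp ρ • θ - Real.exp ρ' • θ'‖ ^ γ)) := by
    rw [key]
    have g1 := norm_add_le
      (((Real.exp ρ)⁻¹ - (Real.exp ρ')⁻¹) • ((Pmap d θ).comp (f (Real.exp ρ • θ)))
        + (Real.exp ρ')⁻¹ • ((Pmap d θ - Pmap d θ').comp (f (Real.exp ρ • θ))))
      ((Real.exp ρ')⁻¹ • ((Pmap d θ').comp (f (Real.exp ρ • θ) - f (Real.exp ρ' • θ'))))
    have g2 := norm_add_le
      (((Real.exp ρ)⁻¹ - (Real.exp ρ')⁻¹) • ((Pmap d θ).comp (f (Real.exp ρ • θ))))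
      ((Real.exp ρ')⁻¹ • ((Pmap d θ - Pmap d θ').comp (f (Real.exp ρ • θ))))
    linarith
  have habsδ : |ρ - ρ'| = ρ - ρ' := abs_of_nonneg hδ0
  rw [habsδ]
  refine hsum.trans ?_
  exact combine_arith γ (‖f 0‖) (max H 0) (ρ - ρ') (‖θ - θ'‖) (Real.exp ρ')
    (‖f 0‖ + max H 0 * Real.exp (γ * ρ)) (‖Real.exp ρ • θ - Real.exp ρ' • θ'‖)
    (|(Real.exp ρ)⁻¹ - (Real.exp ρ')⁻¹|)
    hγ0 hγ1 hA0 hH00 hδ0 hdiff (norm_nonneg _) hθθ'2 hr'1 hNf0 hNfr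
    (abs_nonneg _) hS1 (norm_nonneg _) hzz'

/-- if `f : ℝ^d → L(ℝ^m, ℝ^d)` is `γ`-Hölder (hence of at most
linear growth), then `h(θ,ρ) = Dφ(e^ρ θ) ∘ f(e^ρ θ)` is bounded and `γ`-Hölder on
`Ω = S^{d-1} × [1,∞)`. -/
theorem transformed_field_bounded_holder {d m : ℕ} (γ H : ℝ)
    (hγ0 : 0 < γ) (hγ1 : γ ≤ 1)
    (f : E d → (E m →L[ℝ] E d))
    (hf : ∀ v v', ‖f v - f v'‖ ≤ H * ‖v - v'‖ ^ γ) :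
    ∃ C : ℝ, 0 < C ∧
      (∀ (θ : E d) (ρ : ℝ), ‖θ‖ = 1 → 1 ≤ ρ → ‖hMap f θ ρ‖ ≤ C) ∧
      (∀ (θ θ' : E d) (ρ ρ' : ℝ), ‖θ‖ = 1 → ‖θ'‖ = 1 → 1 ≤ ρ → 1 ≤ ρ' →
        ‖hMap f θ ρ - hMap f θ' ρ'‖ ≤ C * (‖θ - θ'‖ ^ γ + |ρ - ρ'| ^ γ)) := by
  have hA0 : (0:ℝ) ≤ ‖f 0‖ := norm_nonneg _
  have hH00 : (0:ℝ) ≤ max H 0 := le_max_right _ _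
  have he1 : (1:ℝ) ≤ Real.exp 1 := by have := Real.add_one_le_exp 1; linarith
  refine ⟨6 * (‖f 0‖ + max H 0 + 1) * Real.exp 1, by nlinarith, ?_, ?_⟩
  · intro θ ρ hθ hρ
    have h := bound_aux γ H hγ1 f hf hθ hρ
    nlinarith
  · intro θ θ' ρ ρ' hθ hθ' hρ hρ'
    by_cases hc : |ρ - ρ'| ≤ 1
    · rcases le_total ρ' ρ with hord | hord
      · have hd : ρ - ρ' ≤ 1 := by
          have := abs_le.mp hc; linarith [this.2]
        exact holder_aux γ H hγ0 hγ1 f hf θ θ' ρ ρ' hθ hθ' hρ hρ' hord hd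
      · have hd : ρ' - ρ ≤ 1 := by
          have := abs_le.mp hc; linarith [this.1]
        have h := holder_aux γ H hγ0 hγ1 f hf θ' θ ρ' ρ hθ' hθ hρ' hρ hord hd
        rw [norm_sub_rev (hMap f θ' ρ'), norm_sub_rev θ', abs_sub_comm ρ'] at h
        exact h
    · push_neg at hc
      have h1 : (1:ℝ) ≤ |ρ - ρ'| ^ γ := Real.one_le_rpow hc.le hγ0.le
      have h2 := bound_aux γ H hγ1 f hf hθ hρ
      have h3 := bound_aux γ H hγ1 f hf hθ' hρ'
      have h4 : ‖hMap f θ ρ - hMap f θ' ρ'‖ ≤ 4 * (‖f 0‖ + max H 0) :=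
        (norm_sub_le _ _).trans (by linarith)
      have hX2 : (0:ℝ) ≤ ‖θ - θ'‖ ^ γ := Real.rpow_nonneg (norm_nonneg _) _
      have hC0 : (0:ℝ) ≤ 6 * (‖f 0‖ + max H 0 + 1) * Real.exp 1 := by nlinarith
      have h5 : 6 * (‖f 0‖ + max H 0 + 1) * Real.exp 1
          ≤ 6 * (‖f 0‖ + max H 0 + 1) * Real.exp 1 * |ρ - ρ'| ^ γ := by
        nlinarith
      have h6 : 4 * (‖f 0‖ + max H 0) ≤ 6 * (‖f 0‖ + max H 0 + 1) * Real.exp 1 := by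
        nlinarith
      nlinarith [mul_nonneg hC0 hX2]
end
end

section
/- (Explosion for a non-geometric RDE with linear-growth vector field.) Let f : ℝ² → ℝ² be defined by f(ξ₁, ξ₂) = (ξ₁ sin ξ₂, ξ₁), and let F : ℝ² → ℝ² be defined by F(ξ) = Df(ξ)[f(ξ)], so that F(ξ₁, ξ₂) = (ξ₁ sin²ξ₂ + ξ₁² cos ξ₂, ξ₁ sin ξ₂). Let a₁ > 0 and let y : [0,T] → ℝ² be differentiable with y′(t) = F(y(t)) for all t ∈ [0,T] and y(0) = (a₁, 0). Then for all t ∈ [0,T], y(t) = (a₁/(1 − a₁ t), 0); in particular necessarily T < 1/a₁, so the solution explodes in finite time (and hence the rough differential equation dy = f(y) dx driven by the non-geometric rough path x_t = (1, 0, t·(1 ⊗ 1)), whose solutions solve y′ = F(y), explodes in finite time even though f has linear growth). -/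
noncomputable section

/-- The vector field `f(ξ₁, ξ₂) = (ξ₁ sin ξ₂, ξ₁)` (viewed as a map `ℝ² → L(ℝ, ℝ²)`),
which has linear growth. -/
def fEx (ξ : ℝ × ℝ) : ℝ × ℝ := (ξ.1 * Real.sin ξ.2, ξ.1)

/-- The vector field `F = f·∇f`, i.e.
`F(ξ₁, ξ₂) = (ξ₁ sin²ξ₂ + ξ₁² cos ξ₂, ξ₁ sin ξ₂)`. -/
def FEx (ξ : ℝ × ℝ) : ℝ × ℝ :=
  (ξ.1 * Real.sin ξ.2 ^ 2 + ξ.1 ^ 2 * Real.cos ξ.2, ξ.1 * Real.sin ξ.2)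

open Set Real Filter

lemma fderiv_fEx (ξ : ℝ × ℝ) : fderiv ℝ fEx ξ (fEx ξ) = FEx ξ := by
  have hsin : HasFDerivAt (fun p : ℝ × ℝ => Real.sin p.2)
      ((Real.cos ξ.2) • (ContinuousLinearMap.snd ℝ ℝ ℝ)) ξ :=
    (Real.hasDerivAt_sin ξ.2).comp_hasFDerivAt ξ (hasFDerivAt_snd)
  have h1 : HasFDerivAt (fun p : ℝ × ℝ => p.1 * Real.sin p.2)
      (ξ.1 • ((Real.cos ξ.2) • (ContinuousLinearMap.snd ℝ ℝ ℝ)) +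
        (Real.sin ξ.2) • (ContinuousLinearMap.fst ℝ ℝ ℝ)) ξ :=
    (hasFDerivAt_fst (𝕜 := ℝ) (E := ℝ) (F := ℝ)).mul hsin
  have h : HasFDerivAt fEx
      ((ξ.1 • ((Real.cos ξ.2) • (ContinuousLinearMap.snd ℝ ℝ ℝ)) +
        (Real.sin ξ.2) • (ContinuousLinearMap.fst ℝ ℝ ℝ)).prod
        (ContinuousLinearMap.fst ℝ ℝ ℝ)) ξ :=
    h1.prodMk (hasFDerivAt_fst)
  rw [h.fderiv]
  simp [fEx, FEx, ContinuousLinearMap.prod_apply]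
  ring

/-- explosion for a non-geometric RDE with a linear-growth vector
field: `F = Df[f]`, and any solution of `y′ = F(y)`, `y(0) = (a₁, 0)` with `a₁ > 0`
— that is, any solution of the RDE `dy = f(y) dx` driven by the pure-area
non-geometric rough path `x_t = (1, 0, t·(1 ⊗ 1))` — equals `(a₁/(1 − a₁ t), 0)`,
hence is forced to explode before time `1/a₁`. -/
theorem explosion_nongeometric_linear_growth (a₁ T : ℝ) (ha : 0 < a₁) (hT : 0 ≤ T)
    (y : ℝ → ℝ × ℝ) (hy0 : y 0 = (a₁, 0))
    (hy : ∀ t ∈ Set.Icc (0 : ℝ) T, HasDerivAt y (FEx (y t)) t) :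
    (∀ ξ : ℝ × ℝ, fderiv ℝ fEx ξ (fEx ξ) = FEx ξ) ∧
    T < 1 / a₁ ∧
    ∀ t ∈ Set.Icc (0 : ℝ) T, y t = (a₁ / (1 - a₁ * t), 0) := by
  refine ⟨fderiv_fEx, ?_⟩
  set z : ℝ → ℝ × ℝ := fun t => (a₁ / (1 - a₁ * t), 0) with hz_def
  -- z solves the ODE where 1 - a₁ t ≠ 0
  have hz' : ∀ t : ℝ, 1 - a₁ * t ≠ 0 → HasDerivAt z (FEx (z t)) t := by
    intro t hne
    have h1 : HasDerivAt (fun t : ℝ => 1 - a₁ * t) (-a₁) t := by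
      simpa using ((hasDerivAt_id t).const_mul a₁).const_sub 1
    have h2 : HasDerivAt (fun t : ℝ => a₁ / (1 - a₁ * t))
        (a₁ * a₁ / (1 - a₁ * t) ^ 2) t := by
      have := (h1.inv hne).const_mul a₁
      simp only [Pi.inv_apply, ← div_eq_mul_inv] at this
      exact this.congr_deriv (by ring)
    have h3 : HasDerivAt z (a₁ * a₁ / (1 - a₁ * t) ^ 2, 0) t :=
      h2.prodMk (hasDerivAt_const t 0)
    convert h3 using 1
    simp [FEx, hz_def, div_pow]
    ring
  -- continuity of y and z
  have hycont : ContinuousOn y (Icc 0 T) :=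
    fun t ht => (hy t ht).continuousAt.continuousWithinAt
  -- key uniqueness step
  have key : ∀ b : ℝ, 0 ≤ b → b ≤ T → a₁ * b < 1 → EqOn y z (Icc 0 b) := by
    intro b hb0 hbT hb1
    have hzc : ContinuousOn z (Icc 0 b) := by
      intro t ht
      have hne : 1 - a₁ * t ≠ 0 := by
        have : a₁ * t ≤ a₁ * b := by nlinarith [ht.2]
        nlinarith
      exact (hz' t hne).continuousAt.continuousWithinAt
    obtain ⟨C₁, hC₁⟩ := (isCompact_Icc (a := (0:ℝ)) (b := T)).exists_bound_of_continuousOn hycont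
    obtain ⟨C₂, hC₂⟩ := (isCompact_Icc (a := (0:ℝ)) (b := b)).exists_bound_of_continuousOn hzc
    set R : ℝ := max C₁ C₂ with hR
    have hys : ∀ t ∈ Icc (0:ℝ) b, y t ∈ Metric.closedBall (0 : ℝ × ℝ) R := by
      intro t ht
      rw [mem_closedBall_zero_iff]
      exact le_trans (hC₁ t ⟨ht.1, ht.2.trans hbT⟩) (le_max_left _ _)
    have hzs : ∀ t ∈ Icc (0:ℝ) b, z t ∈ Metric.closedBall (0 : ℝ × ℝ) R := by
      intro t ht
      rw [mem_closedBall_zero_iff]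
      exact le_trans (hC₂ t ht) (le_max_right _ _)
    -- FEx is Lipschitz on the ball
    have hFc : ContDiff ℝ (⊤ : ℕ∞) FEx := by
      apply ContDiff.prodMk
      · exact (contDiff_fst.mul ((Real.contDiff_sin.comp contDiff_snd).pow 2)).add
          ((contDiff_fst.pow 2).mul (Real.contDiff_cos.comp contDiff_snd))
      · exact contDiff_fst.mul (Real.contDiff_sin.comp contDiff_snd)
    have hFd : Differentiable ℝ FEx := hFc.differentiable (by simp)
    have hdc : Continuous (fun x => fderiv ℝ FEx x) := ((hFc.fderiv_right (m := 0) (mod_cast le_top)).continuous)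
    obtain ⟨C, hC⟩ := (isCompact_closedBall (0 : ℝ × ℝ) R).exists_bound_of_continuousOn
      hdc.continuousOn
    set K : NNReal := ⟨max C 0, le_max_right _ _⟩ with hK
    have hlip : LipschitzOnWith K FEx (Metric.closedBall (0 : ℝ × ℝ) R) := by
      apply (convex_closedBall _ _).lipschitzOnWith_of_nnnorm_fderiv_le
        (fun x _ => hFd x)
      intro x hx
      rw [← NNReal.coe_le_coe, coe_nnnorm]
      exact le_max_of_le_left (hC x hx)
    exact ODE_solution_unique_of_mem_Icc_right (v := fun _ p => FEx p)
      (fun _ _ => hlip)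
      (hycont.mono (Icc_subset_Icc_right hbT))
      (fun t ht => (hy t ⟨ht.1, ht.2.le.trans hbT⟩).hasDerivWithinAt)
      (fun t ht => hys t (Ico_subset_Icc_self ht))
      hzc
      (fun t ht => by
        have hne : 1 - a₁ * t ≠ 0 := by nlinarith [ht.1, ht.2]
        exact (hz' t hne).hasDerivWithinAt)
      (fun t ht => hzs t (Ico_subset_Icc_self ht))
      (by simp [hy0, hz_def])
  -- T < 1/a₁
  have hTlt : T < 1 / a₁ := by
    by_contra hc
    push_neg at hc
    set b : ℝ := 1 / a₁ with hb
    have hb0 : 0 < b := by positivity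
    have hyb : ∀ t ∈ Ico (0:ℝ) b, y t = z t := by
      intro t ht
      have h1 : t * a₁ < 1 := (lt_div_iff₀ ha).mp ht.2
      exact key t ht.1 (ht.2.le.trans hc) (by linarith [mul_comm a₁ t]) ⟨ht.1, le_rfl⟩
    -- y continuous at b
    have hbmem : b ∈ Icc (0:ℝ) T := ⟨hb0.le, hc⟩
    have hcont : Tendsto y (nhdsWithin b (Iio b)) (nhds (y b)) :=
      ((hy b hbmem).continuousAt.tendsto).mono_left nhdsWithin_le_nhds
    have h1 : Tendsto (fun t => (y t).1) (nhdsWithin b (Iio b)) (nhds ((y b).1)) :=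
      (continuous_fst.tendsto _).comp hcont
    have heq : (fun t => (y t).1) =ᶠ[nhdsWithin b (Iio b)] fun t => a₁ / (1 - a₁ * t) := by
      filter_upwards [Ioo_mem_nhdsLT hb0] with t ht
      rw [hyb t ⟨ht.1.le, ht.2⟩]
    have h2 : Tendsto (fun t => a₁ / (1 - a₁ * t)) (nhdsWithin b (Iio b)) (nhds ((y b).1)) :=
      h1.congr' heq
    have h3 : Tendsto (fun t => a₁ / (1 - a₁ * t)) (nhdsWithin b (Iio b)) atTop := by
      have hden : Tendsto (fun t => 1 - a₁ * t) (nhdsWithin b (Iio b)) (nhdsWithin 0 (Ioi 0)) := by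
        apply tendsto_nhdsWithin_of_tendsto_nhds_of_eventually_within
        · have : Continuous (fun t : ℝ => 1 - a₁ * t) := by continuity
          have := (this.tendsto b).mono_left (nhdsWithin_le_nhds (s := Iio b))
          simpa [hb, one_div, mul_inv_cancel₀ ha.ne'] using this
        · filter_upwards [self_mem_nhdsWithin] with t ht
          have : a₁ * t < a₁ * b := by exact (mul_lt_mul_iff_right₀ ha).mpr ht
          have : a₁ * t < 1 := by
            calc a₁ * t < a₁ * b := this
            _ = 1 := by rw [hb]; field_simp [ha.ne']
          simpa using by linarith
      simp_rw [div_eq_mul_inv]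
      exact (tendsto_inv_nhdsGT_zero.comp hden).const_mul_atTop ha
    exact not_tendsto_nhds_of_tendsto_atTop h3 _ h2
  have hT1 : a₁ * T < 1 := by
    have := (lt_div_iff₀ ha).mp hTlt
    linarith [mul_comm a₁ T]
  exact ⟨hTlt, fun t ht => key T hT le_rfl hT1 ht⟩
end
end
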